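/- Let C₀ > 0 and let f : ℝ² → [0,∞) be measurable with f(p) ≤ C₀ for almost every p. Let ξ ∈ ℝ² with |ξ| ≤ 1. Then there is a constant C, depending only on C₀, such that ∫_{ℝ²} f(p)/(p_0 (1 + p̂·ξ)) dp ≤ C (∫_{ℝ²} p_0⁴ f(p) dp)^{2/5}. -/

import Mathlib

open MeasureTheory
open scoped NNReal RealInnerProductSpace

/-- `p₀ = √(1 + |p|²)` for `p ∈ ℝ²`. -/
noncomputable def pZero (p : EuclideanSpace ℝ (Fin 2)) : ℝ := Real.sqrt (1 + ‖p‖ ^ 2)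

/-- `p̂ = p / p₀` for `p ∈ ℝ²`. -/
noncomputable def pHat (p : EuclideanSpace ℝ (Fin 2)) : EuclideanSpace ℝ (Fin 2) :=
  (pZero p)⁻¹ • p

/-! With `η` a unit vector orthogonal to `ξ`, `(p·ξ)² + (η·p)² ≤ |p|²`, so
`p₀ (1 + p̂·ξ) = p₀ + p·ξ ≥ (p₀² - (p·ξ)²) / (2 p₀) ≥ (1 + (η·p)²) / (2 p₀)`.
On the ball `|p| ≤ R` (with `R ≥ 1`) this bounds the integrand by `4 C₀ R / (1 + (η·p)²)`,
whose integral over the strip `|ζ·p| ≤ R` (`ζ ⊥ η`) containing the ball is `8π C₀ R²`; outside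
the ball the integrand is at most `2 p₀ f ≤ 2 p₀⁴ f / R³`. For `I = ∫ p₀⁴ f ≥ 1` the choice
`R = I^{1/5}` balances the two terms; for `I ≤ 1` the bound `2 p₀ f ≤ 2 p₀⁴ f` alone gives
`2 I ≤ 2 I^{2/5}`. -/

open Module Real
open scoped ENNReal

local notation "E2" => EuclideanSpace ℝ (Fin 2)

theorem exists_norm_eq_one_inner_eq_zero {E : Type*} [NormedAddCommGroup E]
    [InnerProductSpace ℝ E] [FiniteDimensional ℝ E] (hE : 2 ≤ finrank ℝ E) (ξ : E) :
    ∃ η : E, ‖η‖ = 1 ∧ ⟪η, ξ⟫ = 0 := by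
  have hspan : finrank ℝ (ℝ ∙ ξ) ≤ 1 := by
    simpa using finrank_span_le_card ({ξ} : Set E)
  have : Nontrivial (ℝ ∙ ξ)ᗮ := by
    apply Module.nontrivial_of_finrank_pos (R := ℝ)
    have := (ℝ ∙ ξ).finrank_add_finrank_orthogonal
    omega
  obtain ⟨η, hη⟩ := exists_norm_eq (ℝ ∙ ξ)ᗮ zero_le_one
  exact ⟨η, hη, Submodule.mem_orthogonal_singleton_iff_inner_left.mp η.2⟩

theorem inner_sq_add_inner_sq_le_norm_sq {E : Type*} [NormedAddCommGroup E]
    [InnerProductSpace ℝ E] {ξ η : E} (hξ : ‖ξ‖ ≤ 1) (hη : ‖η‖ = 1) (hηξ : ⟪η, ξ⟫ = 0) (p : E) :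
    ⟪p, ξ⟫ ^ 2 + ⟪η, p⟫ ^ 2 ≤ ‖p‖ ^ 2 := by
  set q := p - ⟪η, p⟫ • η
  have hηη : ⟪η, η⟫ = 1 := by rw [real_inner_self_eq_norm_sq, hη, one_pow]
  have hq : ⟪⟪η, p⟫ • η, q⟫ = 0 := by
    rw [real_inner_smul_left, inner_sub_right, real_inner_smul_right, hηη]; ring
  have hp : ⟪η, p⟫ • η + q = p := add_sub_cancel _ _
  have hpξ : ⟪p, ξ⟫ = ⟪q, ξ⟫ := by
    rw [← hp, inner_add_left, real_inner_smul_left, hηξ, mul_zero, zero_add]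
  have hnorm : ‖p‖ ^ 2 = ⟪η, p⟫ ^ 2 + ‖q‖ ^ 2 := by
    have := norm_add_sq_eq_norm_sq_add_norm_sq_of_inner_eq_zero _ _ hq
    rw [hp, norm_smul, hη, mul_one, Real.norm_eq_abs, abs_mul_abs_self] at this
    linear_combination this
  have hcs : ⟪q, ξ⟫ ^ 2 ≤ ‖q‖ ^ 2 := by
    calc ⟪q, ξ⟫ ^ 2 ≤ (‖q‖ * ‖ξ‖) ^ 2 := by
          rw [← sq_abs]; gcongr; exact abs_real_inner_le_norm q ξ
      _ ≤ ‖q‖ ^ 2 := by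
          rw [mul_pow]
          exact mul_le_of_le_one_right (sq_nonneg _) (pow_le_one₀ (norm_nonneg ξ) hξ)
  rw [hpξ, hnorm]
  linarith

section pZero

variable {ξ η : E2}

theorem pZero_sq (p : E2) : pZero p ^ 2 = 1 + ‖p‖ ^ 2 := sq_sqrt (by positivity)

theorem one_le_pZero (p : E2) : 1 ≤ pZero p :=
  one_le_sqrt.mpr (le_add_of_nonneg_right (by positivity))

theorem norm_lt_pZero (p : E2) : ‖p‖ < pZero p :=
  (lt_sqrt (norm_nonneg p)).mpr (by linarith)

theorem pZero_pos (p : E2) : 0 < pZero p := zero_lt_one.trans_le (one_le_pZero p)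

theorem pZero_mul_one_add_inner_pHat (p ξ : E2) :
    pZero p * (1 + ⟪pHat p, ξ⟫) = pZero p + ⟪p, ξ⟫ := by
  have := (pZero_pos p).ne'
  rw [pHat, real_inner_smul_left]
  field_simp

theorem pZero_add_inner_pos (hξ : ‖ξ‖ ≤ 1) (p : E2) : 0 < pZero p + ⟪p, ξ⟫ := by
  have h := neg_le_of_abs_le (abs_real_inner_le_norm p ξ)
  nlinarith [norm_lt_pZero p, norm_nonneg p, norm_nonneg ξ]

theorem one_add_inner_sq_le (hξ : ‖ξ‖ ≤ 1) (hη : ‖η‖ = 1) (hηξ : ⟪η, ξ⟫ = 0) (p : E2) :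
    1 + ⟪η, p⟫ ^ 2 ≤ 2 * pZero p * (pZero p + ⟪p, ξ⟫) := by
  nlinarith [inner_sq_add_inner_sq_le_norm_sq hξ hη hηξ p, pZero_sq p, pZero_add_inner_pos hξ p,
    one_le_pZero p]

theorem div_pZero_add_inner_le (hξ : ‖ξ‖ ≤ 1) (hη : ‖η‖ = 1) (hηξ : ⟪η, ξ⟫ = 0) {y : ℝ}
    (hy : 0 ≤ y) (p : E2) :
    y / (pZero p + ⟪p, ξ⟫) ≤ 2 * pZero p * y / (1 + ⟪η, p⟫ ^ 2) := by
  rw [div_le_div_iff₀ (pZero_add_inner_pos hξ p) (by positivity)]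
  nlinarith [one_add_inner_sq_le hξ hη hηξ p]

theorem div_pZero_add_inner_le_two_pZero_mul (hξ : ‖ξ‖ ≤ 1) {y : ℝ} (hy : 0 ≤ y) (p : E2) :
    y / (pZero p + ⟪p, ξ⟫) ≤ 2 * pZero p * y := by
  obtain ⟨η, hη, hηξ⟩ := exists_norm_eq_one_inner_eq_zero (by simp) ξ
  have := pZero_pos p
  refine (div_pZero_add_inner_le hξ hη hηξ hy p).trans (div_le_self (by positivity) ?_)
  nlinarith [sq_nonneg ⟪η, p⟫]

theorem div_pZero_add_inner_le_of_norm_le (hξ : ‖ξ‖ ≤ 1) (hη : ‖η‖ = 1) (hηξ : ⟪η, ξ⟫ = 0)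
    {C₀ R y : ℝ} (hR : 1 ≤ R) (hy : 0 ≤ y) (hyC : y ≤ C₀) {p : E2} (hp : ‖p‖ ≤ R) :
    y / (pZero p + ⟪p, ξ⟫) ≤ 4 * C₀ * R * (1 + ⟪η, p⟫ ^ 2)⁻¹ := by
  have hp₀ : pZero p ≤ 2 * R := by
    nlinarith [pZero_sq p, one_le_pZero p, norm_nonneg p]
  calc y / (pZero p + ⟪p, ξ⟫) ≤ 2 * pZero p * y / (1 + ⟪η, p⟫ ^ 2) :=
        div_pZero_add_inner_le hξ hη hηξ hy p
    _ ≤ 2 * (2 * R) * C₀ / (1 + ⟪η, p⟫ ^ 2) := by gcongr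
    _ = 4 * C₀ * R * (1 + ⟪η, p⟫ ^ 2)⁻¹ := by ring

theorem div_pZero_add_inner_le_of_le_norm (hξ : ‖ξ‖ ≤ 1) {R y : ℝ} (hR : 0 < R) (hy : 0 ≤ y)
    {p : E2} (hp : R ≤ ‖p‖) :
    y / (pZero p + ⟪p, ξ⟫) ≤ 2 / R ^ 3 * (pZero p ^ 4 * y) := by
  have hRp₀ : R ^ 3 ≤ pZero p ^ 3 := by gcongr; exact hp.trans (norm_lt_pZero p).le
  calc y / (pZero p + ⟪p, ξ⟫) ≤ 2 * pZero p * y := div_pZero_add_inner_le_two_pZero_mul hξ hy p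
    _ = 2 / R ^ 3 * (pZero p ^ 4 * y) * (R ^ 3 / pZero p ^ 3) := by
        have := (pZero_pos p).ne'
        field_simp
    _ ≤ 2 / R ^ 3 * (pZero p ^ 4 * y) := by
        have := pZero_pos p
        exact mul_le_of_le_one_right (by positivity) (div_le_one_of_le₀ hRp₀ (by positivity))

theorem ofReal_div_le_strip_add_tail (hξ : ‖ξ‖ ≤ 1) (hη : ‖η‖ = 1) (hηξ : ⟪η, ξ⟫ = 0)
    {ζ : E2} (hζ : ‖ζ‖ = 1) {C₀ R y : ℝ} (hR : 1 ≤ R) (hy : 0 ≤ y) (hyC : y ≤ C₀) (p : E2) :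
    ENNReal.ofReal (y / (pZero p + ⟪p, ξ⟫)) ≤
      (Set.Icc (-R) R).indicator 1 ⟪ζ, p⟫ * ENNReal.ofReal (4 * C₀ * R * (1 + ⟪η, p⟫ ^ 2)⁻¹)
        + ENNReal.ofReal (2 / R ^ 3) * ENNReal.ofReal (pZero p ^ 4 * y) := by
  rcases le_total ‖p‖ R with hp | hp
  · have hζp : ⟪ζ, p⟫ ∈ Set.Icc (-R) R := by
      rw [Set.mem_Icc, ← abs_le]
      exact (abs_real_inner_le_norm ζ p).trans (by rw [hζ, one_mul]; exact hp)
    rw [Set.indicator_of_mem hζp, Pi.one_apply, one_mul]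
    exact le_add_right (ENNReal.ofReal_le_ofReal
      (div_pZero_add_inner_le_of_norm_le hξ hη hηξ hR hy hyC hp))
  · rw [← ENNReal.ofReal_mul (by positivity)]
    exact le_add_left (ENNReal.ofReal_le_ofReal
      (div_pZero_add_inner_le_of_le_norm hξ (by linarith) hy hp))

end pZero

theorem lintegral_ofReal_inv_one_add_sq :
    ∫⁻ t : ℝ, ENNReal.ofReal (1 + t ^ 2)⁻¹ = ENNReal.ofReal π := by
  rw [← integral_univ_inv_one_add_sq]
  exact (ofReal_integral_eq_lintegral_ofReal integrable_inv_one_add_sq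
    (ae_of_all _ fun t => by positivity)).symm

theorem lintegral_mul_comp_inner_of_orthonormal {E : Type*} [NormedAddCommGroup E]
    [InnerProductSpace ℝ E] [FiniteDimensional ℝ E] [MeasurableSpace E] [BorelSpace E]
    (hE : finrank ℝ E = 2) {u v : E} (huv : Orthonormal ℝ ![u, v]) {F G : ℝ → ℝ≥0∞}
    (hF : Measurable F) (hG : Measurable G) :
    ∫⁻ p, F ⟪u, p⟫ * G ⟪v, p⟫ = (∫⁻ t, F t) * ∫⁻ t, G t := by
  let b : OrthonormalBasis (Fin 2) ℝ E :=
    (basisOfOrthonormalOfCardEqFinrank huv (by simp [hE])).toOrthonormalBasis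
      (by rwa [coe_basisOfOrthonormalOfCardEqFinrank])
  have hb (p : E) (i : Fin 2) : b.repr p i = ⟪![u, v] i, p⟫ := by
    rw [OrthonormalBasis.repr_apply_apply]; simp [b]
  have hmp : MeasurePreserving (fun p : E => (⟪u, p⟫, ⟪v, p⟫)) volume (volume.prod volume) := by
    convert (measurePreserving_finTwoArrow (volume : Measure ℝ)).comp
      ((PiLp.volume_preserving_ofLp (Fin 2)).comp b.measurePreserving_repr) using 1
    ext p <;> simp [hb]
  rw [← lintegral_prod_mul hF.aemeasurable hG.aemeasurable]
  exact hmp.lintegral_comp (f := fun y : ℝ × ℝ => F y.1 * G y.2) (by fun_prop)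

section lintegral

variable {C₀ : ℝ} {f : E2 → ℝ} {ξ : E2}

theorem lintegral_div_pZero_add_inner_le_two_mul (hf : ∀ p, 0 ≤ f p) (hξ : ‖ξ‖ ≤ 1) :
    ∫⁻ p, ENNReal.ofReal (f p / (pZero p + ⟪p, ξ⟫))
      ≤ 2 * ∫⁻ p, ENNReal.ofReal (pZero p ^ 4 * f p) := by
  rw [← lintegral_const_mul' _ _ ENNReal.ofNat_ne_top]
  refine lintegral_mono fun p => ?_
  calc ENNReal.ofReal (f p / (pZero p + ⟪p, ξ⟫))
      ≤ ENNReal.ofReal (2 * (pZero p ^ 4 * f p)) := by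
        refine ENNReal.ofReal_le_ofReal
          ((div_pZero_add_inner_le_two_pZero_mul hξ (hf p) p).trans ?_)
        have : pZero p ≤ pZero p ^ 4 := le_self_pow₀ (one_le_pZero p) (by norm_num)
        nlinarith [hf p]
    _ = 2 * ENNReal.ofReal (pZero p ^ 4 * f p) := by
        rw [ENNReal.ofReal_mul zero_le_two, ENNReal.ofReal_ofNat]

theorem lintegral_div_pZero_add_inner_le_of_one_le (hC₀ : 0 ≤ C₀) (hf : ∀ p, 0 ≤ f p)
    (hfC : ∀ᵐ p, f p ≤ C₀) (hξ : ‖ξ‖ ≤ 1) {R : ℝ} (hR : 1 ≤ R) :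
    ∫⁻ p, ENNReal.ofReal (f p / (pZero p + ⟪p, ξ⟫))
      ≤ ENNReal.ofReal (8 * π * C₀ * R ^ 2)
        + ENNReal.ofReal (2 / R ^ 3) * ∫⁻ p, ENNReal.ofReal (pZero p ^ 4 * f p) := by
  have hE : 2 ≤ finrank ℝ E2 := by simp
  obtain ⟨η, hη, hηξ⟩ := exists_norm_eq_one_inner_eq_zero hE ξ
  obtain ⟨ζ, hζ, hζη⟩ := exists_norm_eq_one_inner_eq_zero hE η
  have hon : Orthonormal ℝ ![ζ, η] := by
    rw [orthonormal_iff_ite]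
    simp [Fin.forall_fin_two, hζ, hη, hζη, real_inner_comm ζ η]
  have hstrip : ∫⁻ p, (Set.Icc (-R) R).indicator 1 ⟪ζ, p⟫
      * ENNReal.ofReal (4 * C₀ * R * (1 + ⟪η, p⟫ ^ 2)⁻¹) = ENNReal.ofReal (8 * π * C₀ * R ^ 2) := by
    refine (lintegral_mul_comp_inner_of_orthonormal (by simp) hon
      (measurable_one.indicator measurableSet_Icc)
      (G := fun t => ENNReal.ofReal (4 * C₀ * R * (1 + t ^ 2)⁻¹)) (by fun_prop)).trans ?_
    rw [lintegral_indicator_one measurableSet_Icc, Real.volume_Icc]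
    simp_rw [ENNReal.ofReal_mul (by positivity : 0 ≤ 4 * C₀ * R)]
    rw [lintegral_const_mul' _ _ ENNReal.ofReal_ne_top, lintegral_ofReal_inv_one_add_sq,
      ← ENNReal.ofReal_mul (by positivity), ← ENNReal.ofReal_mul (by linarith)]
    congr 1
    ring
  calc ∫⁻ p, ENNReal.ofReal (f p / (pZero p + ⟪p, ξ⟫))
      ≤ ∫⁻ p, ((Set.Icc (-R) R).indicator 1 ⟪ζ, p⟫
          * ENNReal.ofReal (4 * C₀ * R * (1 + ⟪η, p⟫ ^ 2)⁻¹)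
          + ENNReal.ofReal (2 / R ^ 3) * ENNReal.ofReal (pZero p ^ 4 * f p)) :=
        lintegral_mono_ae (hfC.mono fun p hp =>
          ofReal_div_le_strip_add_tail hξ hη hηξ hζ hR (hf p) hp p)
    _ = _ := by
        rw [lintegral_add_left (by fun_prop (disch := exact measurableSet_Icc)), hstrip,
          lintegral_const_mul' _ _ ENNReal.ofReal_ne_top]

end lintegral

theorem le_ofReal_add_two_mul_rpow_two_fifths {J I : ℝ≥0∞} {a : ℝ} (ha : 0 ≤ a)
    (hsmall : J ≤ 2 * I)
    (hsplit : ∀ R : ℝ, 1 ≤ R → J ≤ ENNReal.ofReal (a * R ^ 2) + ENNReal.ofReal (2 / R ^ 3) * I) :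
    J ≤ ENNReal.ofReal (a + 2) * I ^ ((2 : ℝ) / 5) := by
  rcases le_total I 1 with hI | hI
  · calc J ≤ 2 * I := hsmall
      _ ≤ ENNReal.ofReal (a + 2) * I ^ ((2 : ℝ) / 5) := by
        gcongr
        · rw [← ENNReal.ofReal_ofNat]
          exact ENNReal.ofReal_le_ofReal (by linarith)
        · simpa using ENNReal.rpow_le_rpow_of_exponent_ge hI (by norm_num : (2 : ℝ) / 5 ≤ 1)
  rcases eq_or_ne I ⊤ with rfl | hItop
  · rw [ENNReal.top_rpow_of_pos (by norm_num), ENNReal.mul_top (by simp; linarith)]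
    exact le_top
  obtain ⟨r, hr0, rfl⟩ : ∃ r : ℝ, 0 ≤ r ∧ I = ENNReal.ofReal r :=
    ⟨I.toReal, ENNReal.toReal_nonneg, (ENNReal.ofReal_toReal hItop).symm⟩
  have hr : 1 ≤ r := ENNReal.one_le_ofReal.mp hI
  set R := r ^ ((1 : ℝ) / 5)
  have hR : 1 ≤ R := Real.one_le_rpow hr (by norm_num)
  have hRpow (n : ℕ) : R ^ n = r ^ ((n : ℝ) / 5) := by
    rw [← Real.rpow_natCast, ← Real.rpow_mul hr0]
    ring_nf
  have hr_split : r = R ^ 3 * r ^ ((2 : ℝ) / 5) := by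
    rw [hRpow, ← Real.rpow_add (by linarith)]
    norm_num
  calc J ≤ ENNReal.ofReal (a * R ^ 2) + ENNReal.ofReal (2 / R ^ 3) * ENNReal.ofReal r :=
        hsplit R hR
    _ = ENNReal.ofReal ((a + 2) * r ^ ((2 : ℝ) / 5)) := by
        rw [← ENNReal.ofReal_mul (by positivity), ← ENNReal.ofReal_add (by positivity)
          (by positivity)]
        congr 1
        rw [hRpow 2]
        nth_rewrite 2 [hr_split]
        field_simp
        push_cast
        ring
    _ = ENNReal.ofReal (a + 2) * ENNReal.ofReal r ^ ((2 : ℝ) / 5) := by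
        rw [ENNReal.ofReal_rpow_of_nonneg hr0 (by norm_num), ← ENNReal.ofReal_mul (by linarith)]

/-- **Momentum-singularity estimate, second form** (Lemma 5.2, estimate (5.2)).
For `f : ℝ² → [0,∞)` measurable with `f ≤ C₀` a.e. and `|ξ| ≤ 1`, there is a constant
`C = C(C₀)` with `∫ f(p)/(p₀(1+p̂·ξ)) dp ≤ C (∫ p₀⁴ f dp)^{2/5}`. -/
theorem singularity_estimate_two (C₀ : ℝ) (hC₀ : 0 < C₀) :
    ∃ C : ℝ≥0, 0 < C ∧
      ∀ (f : EuclideanSpace ℝ (Fin 2) → ℝ),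
        Measurable f → (∀ p, 0 ≤ f p) →
        (∀ᵐ p : EuclideanSpace ℝ (Fin 2), f p ≤ C₀) →
        ∀ (ξ : EuclideanSpace ℝ (Fin 2)), ‖ξ‖ ≤ 1 →
          (∫⁻ p, ENNReal.ofReal (f p / (pZero p * (1 + ⟪pHat p, ξ⟫))))
            ≤ C * (∫⁻ p, ENNReal.ofReal (pZero p ^ 4 * f p)) ^ ((2 : ℝ) / 5) := by
  refine ⟨(8 * π * C₀ + 2).toNNReal, Real.toNNReal_pos.mpr (by positivity),
    fun f _ hf hfC ξ hξ => ?_⟩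
  simp_rw [pZero_mul_one_add_inner_pHat]
  exact le_ofReal_add_two_mul_rpow_two_fifths (by positivity)
    (lintegral_div_pZero_add_inner_le_two_mul hf hξ)
    fun R hR => lintegral_div_pZero_add_inner_le_of_one_le hC₀.le hf hfC hξ hR
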